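/- Up to the symmetry of the house graph (the automorphism swapping w1↔w1, w2↔w5, w3↔w4, w6↔w7) and permutation of the four '2'-colors, the house graph G0 admits exactly two (1,2,2,2,2)-packing edge-colorings: Type I with color 1 on {w2w5, w3w4} and Type II with color 1 on {w2w3, w4w5}. -/

import Mathlib

open SimpleGraph

/-- The distance between two edges: the minimum, over endpoints `a` of `e` and `b` of `f`,
of the vertex distance between `a` and `b` (as an extended natural number,
`⊤` when no endpoints are connected). -/
noncomputable def edgeDist {V : Type*} (G : SimpleGraph V) (e f : Sym2 V) : ℕ∞ :=
  sInf {d : ℕ∞ | ∃ a ∈ e, ∃ b ∈ f, G.edist a b = d}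

/-- An `S`-packing edge-coloring (in the closest-endpoint vertex-distance convention):
a map `c` assigning to each edge a color `i : Fin k` such that any two distinct
same-colored edges are at edge-distance at least `S i`.  A class with `S i = 1` is a
matching, `S i = 2` an induced matching, etc. -/
def IsPackingEdgeColoring {V : Type*} (G : SimpleGraph V) {k : ℕ} (S : Fin k → ℕ)
    (c : Sym2 V → Fin k) : Prop :=
  ∀ e ∈ G.edgeSet, ∀ f ∈ G.edgeSet, e ≠ f → c e = c f →
    (S (c e) : ℕ∞) ≤ edgeDist G e f

/-- The house graph $G_0$ (vertex $w_{i+1}$ = `i : Fin 7`). -/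
def G0 : SimpleGraph (Fin 7) :=
  SimpleGraph.fromRel (fun a b =>
    (a, b) ∈ ([(0,1),(1,2),(2,3),(3,4),(0,4),(1,4),(2,5),(3,6)] : List (Fin 7 × Fin 7)))

/-- The reflection automorphism of the house: $w_1 ↦ w_1, w_2 ↔ w_5, w_3 ↔ w_4, w_6 ↔ w_7$. -/
def houseRefl : Fin 7 → Fin 7 := ![0, 4, 3, 2, 1, 6, 5]

/-- The Type I coloring (color `0` is the matching color, `1,2,3,4` are the four 2-colors). -/
def typeI : Sym2 (Fin 7) → Fin 5 := fun e =>
  if e = s(1,4) ∨ e = s(2,3) then 0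
  else if e = s(0,1) ∨ e = s(3,6) then 1
  else if e = s(0,4) ∨ e = s(2,5) then 2
  else if e = s(1,2) then 3
  else 4

/-- The Type II coloring. -/
def typeII : Sym2 (Fin 7) → Fin 5 := fun e =>
  if e = s(1,2) ∨ e = s(3,4) then 0
  else if e = s(0,1) ∨ e = s(3,6) then 1
  else if e = s(0,4) ∨ e = s(2,5) then 2
  else if e = s(1,4) then 3
  else 4

/-- Two colorings agree up to a permutation of the four 2-colors (fixing the matching
color `0`) and possibly the reflection symmetry of the house. -/
def EquivCol (c d : Sym2 (Fin 7) → Fin 5) : Prop :=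
  ∃ σ : Equiv.Perm (Fin 5), σ 0 = 0 ∧
    ((∀ e ∈ G0.edgeSet, σ (c e) = d e) ∨
     (∀ e ∈ G0.edgeSet, σ (c (e.map houseRefl)) = d e))



instance : DecidableRel G0.Adj := fun a b =>
  decidable_of_iff' _ (SimpleGraph.fromRel_adj _ a b)

lemma edgeDist_le' {V : Type*} (G : SimpleGraph V) {e f : Sym2 V} {a b : V}
    (ha : a ∈ e) (hb : b ∈ f) : edgeDist G e f ≤ G.edist a b :=
  sInf_le ⟨a, ha, b, hb, rfl⟩

lemma le_edgeDist' {V : Type*} (G : SimpleGraph V) {e f : Sym2 V} {n : ℕ∞}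
    (h : ∀ a ∈ e, ∀ b ∈ f, n ≤ G.edist a b) : n ≤ edgeDist G e f := by
  apply le_sInf
  rintro d ⟨a, ha, b, hb, rfl⟩
  exact h a ha b hb

lemma one_le_edist' {V : Type*} {G : SimpleGraph V} {a b : V} (h : a ≠ b) :
    1 ≤ G.edist a b := by
  rw [ENat.one_le_iff_ne_zero]
  simpa [edist_eq_zero_iff] using h

lemma two_le_edist' {V : Type*} {G : SimpleGraph V} {a b : V} (h : a ≠ b)
    (h2 : ¬ G.Adj a b) : 2 ≤ G.edist a b := by
  by_contra hlt
  push_neg at hlt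
  have hne : G.edist a b ≠ ⊤ := hlt.ne_top
  lift G.edist a b to ℕ using hne with n hn
  have hn2 : n < 2 := by exact_mod_cast hlt
  interval_cases n
  · exact h (edist_eq_zero_iff.mp (by exact_mod_cast hn.symm))
  · exact h2 (edist_eq_one_iff_adj.mp (by exact_mod_cast hn.symm))

lemma mem_G0 : ∀ e ∈ G0.edgeSet, e = s(0,1) ∨ e = s(1,2) ∨ e = s(2,3) ∨ e = s(3,4) ∨
    e = s(0,4) ∨ e = s(1,4) ∨ e = s(2,5) ∨ e = s(3,6) := by
  intro e
  induction e using Sym2.ind with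
  | _ a b =>
    rw [SimpleGraph.mem_edgeSet]
    revert a b; decide

lemma one_le_edgeDist (x y u v : Fin 7)
    (h : x ≠ u ∧ x ≠ v ∧ y ≠ u ∧ y ≠ v) :
    (1 : ℕ∞) ≤ edgeDist G0 s(x,y) s(u,v) := by
  apply le_edgeDist'
  intro a ha b hb
  rw [Sym2.mem_iff] at ha hb
  obtain ⟨h1, h2, h3, h4⟩ := h
  rcases ha with rfl | rfl <;> rcases hb with rfl | rfl <;>
    [exact one_le_edist' h1; exact one_le_edist' h2;
     exact one_le_edist' h3; exact one_le_edist' h4]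

lemma two_le_edgeDist (x y u v : Fin 7)
    (h : (x ≠ u ∧ x ≠ v ∧ y ≠ u ∧ y ≠ v) ∧
      (¬G0.Adj x u ∧ ¬G0.Adj x v ∧ ¬G0.Adj y u ∧ ¬G0.Adj y v)) :
    (2 : ℕ∞) ≤ edgeDist G0 s(x,y) s(u,v) := by
  apply le_edgeDist'
  intro a ha b hb
  rw [Sym2.mem_iff] at ha hb
  obtain ⟨⟨h1, h2, h3, h4⟩, ⟨g1, g2, g3, g4⟩⟩ := h
  rcases ha with rfl | rfl <;> rcases hb with rfl | rfl <;>
    [exact two_le_edist' h1 g1; exact two_le_edist' h2 g2;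
     exact two_le_edist' h3 g3; exact two_le_edist' h4 g4]

/-- colors are at least 1 -/
lemma S_ge_one : ∀ i : Fin 5, (![1,2,2,2,2] : Fin 5 → ℕ) i ≠ 0 := by decide

lemma S_eq_two : ∀ i : Fin 5, i ≠ 0 → (![1,2,2,2,2] : Fin 5 → ℕ) i = 2 := by decide

/-- same-colored edges cannot share a vertex -/
lemma conflict_share {c : Sym2 (Fin 7) → Fin 5}
    (hc : IsPackingEdgeColoring G0 ![1,2,2,2,2] c) {e f : Sym2 (Fin 7)}
    (he : e ∈ G0.edgeSet) (hf : f ∈ G0.edgeSet) (hne : e ≠ f) {w : Fin 7}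
    (hwe : w ∈ e) (hwf : w ∈ f) : c e ≠ c f := by
  intro hcol
  have h1 := hc e he f hf hne hcol
  have h2 : edgeDist G0 e f ≤ 0 := by
    have := edgeDist_le' G0 hwe hwf
    simpa [edist_self] using this
  have h3 : ((![1,2,2,2,2] (c e) : ℕ) : ℕ∞) = 0 := le_antisymm (h1.trans h2) zero_le
  exact S_ge_one (c e) (by exact_mod_cast h3)

/-- same-colored edges with adjacent endpoints must have color 0 -/
lemma conflict_adj {c : Sym2 (Fin 7) → Fin 5}
    (hc : IsPackingEdgeColoring G0 ![1,2,2,2,2] c) {e f : Sym2 (Fin 7)}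
    (he : e ∈ G0.edgeSet) (hf : f ∈ G0.edgeSet) (hne : e ≠ f) {a b : Fin 7}
    (ha : a ∈ e) (hb : b ∈ f) (hab : G0.Adj a b) (hcol : c e = c f) : c e = 0 := by
  by_contra h0
  have h1 := hc e he f hf hne hcol
  rw [S_eq_two (c e) h0] at h1
  have h2 : edgeDist G0 e f ≤ 1 := by
    have := edgeDist_le' G0 ha hb
    rwa [edist_eq_one_iff_adj.mpr hab] at this
  have : (2 : ℕ∞) ≤ 1 := le_trans (by exact_mod_cast h1) h2
  norm_num at this

set_option maxRecDepth 10000 in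
set_option synthInstance.maxSize 5000 in
set_option synthInstance.maxHeartbeats 2000000 in
set_option maxHeartbeats 2000000 in
lemma classify : ∀ xB xC : Fin 5, xB ≠ xC →
    ∀ xD : Fin 5, (xC ≠ xD ∧ (xB = xD → xB = 0)) →
    ∀ xF : Fin 5, (xB ≠ xF ∧ xD ≠ xF ∧ (xC = xF → xC = 0)) →
    ∀ xA : Fin 5, (xA ≠ xB ∧ xA ≠ xF ∧ (xA = xC → xA = 0) ∧ (xA = xD → xA = 0)) →
    ∀ xE : Fin 5, (xA ≠ xE ∧ xD ≠ xE ∧ xE ≠ xF ∧ (xB = xE → xB = 0) ∧ (xC = xE → xC = 0)) →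
    ∀ xG : Fin 5, (xB ≠ xG ∧ xC ≠ xG ∧ (xA = xG → xA = 0) ∧ (xD = xG → xD = 0) ∧ (xF = xG → xF = 0)) →
    ∀ xH : Fin 5, (xC ≠ xH ∧ xD ≠ xH ∧ (xB = xH → xB = 0) ∧ (xE = xH → xE = 0) ∧ (xF = xH → xF = 0) ∧ (xG = xH → xG = 0)) →
    ((xC = 0 ∧ xF = 0 ∧ xA = xH ∧ xE = xG ∧ xA ≠ 0 ∧ xE ≠ 0 ∧ xB ≠ 0 ∧ xD ≠ 0 ∧
      xA ≠ xE ∧ xA ≠ xB ∧ xA ≠ xD ∧ xE ≠ xB ∧ xE ≠ xD ∧ xB ≠ xD) ∨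
    (xB = 0 ∧ xD = 0 ∧ xA = xH ∧ xE = xG ∧ xA ≠ 0 ∧ xE ≠ 0 ∧ xC ≠ 0 ∧ xF ≠ 0 ∧
      xA ≠ xE ∧ xA ≠ xC ∧ xA ≠ xF ∧ xE ≠ xC ∧ xE ≠ xF ∧ xC ≠ xF)) := by
  decide

def mkPerm (p q r s : Fin 5) : Fin 5 → Fin 5 := fun x =>
  if x = 0 then 0 else if x = p then 1 else if x = q then 2 else if x = r then 3 else 4

lemma mkPerm_bijective : ∀ p q r s : Fin 5,
    (p ≠ 0 ∧ q ≠ 0 ∧ r ≠ 0 ∧ s ≠ 0 ∧ p ≠ q ∧ p ≠ r ∧ p ≠ s ∧ q ≠ r ∧ q ≠ s ∧ r ≠ s) →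
    Function.Bijective (mkPerm p q r s) := by decide

lemma mkPerm_vals : ∀ p q r s : Fin 5,
    (p ≠ 0 ∧ q ≠ 0 ∧ r ≠ 0 ∧ s ≠ 0 ∧ p ≠ q ∧ p ≠ r ∧ p ≠ s ∧ q ≠ r ∧ q ≠ s ∧ r ≠ s) →
    (mkPerm p q r s 0 = 0 ∧ mkPerm p q r s p = 1 ∧ mkPerm p q r s q = 2 ∧
     mkPerm p q r s r = 3 ∧ mkPerm p q r s s = 4) := by decide

/- edge membership facts -/
lemma memA : s(0,1) ∈ G0.edgeSet := G0.mem_edgeSet.mpr (by decide)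
lemma memB : s(1,2) ∈ G0.edgeSet := G0.mem_edgeSet.mpr (by decide)
lemma memC : s(2,3) ∈ G0.edgeSet := G0.mem_edgeSet.mpr (by decide)
lemma memD : s(3,4) ∈ G0.edgeSet := G0.mem_edgeSet.mpr (by decide)
lemma memE : s(0,4) ∈ G0.edgeSet := G0.mem_edgeSet.mpr (by decide)
lemma memF : s(1,4) ∈ G0.edgeSet := G0.mem_edgeSet.mpr (by decide)
lemma memG : s(2,5) ∈ G0.edgeSet := G0.mem_edgeSet.mpr (by decide)
lemma memH : s(3,6) ∈ G0.edgeSet := G0.mem_edgeSet.mpr (by decide)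

/- bounds for the positive part -/
lemma bFC : ((![1,2,2,2,2] (typeI s(1,4)) : ℕ) : ℕ∞) ≤ edgeDist G0 s(1,4) s(2,3) := by
  rw [show typeI s(1,4) = 0 by decide]
  exact le_trans (by norm_num) (one_le_edgeDist 1 4 2 3 (by decide))
lemma bCF : ((![1,2,2,2,2] (typeI s(2,3)) : ℕ) : ℕ∞) ≤ edgeDist G0 s(2,3) s(1,4) := by
  rw [show typeI s(2,3) = 0 by decide]
  exact le_trans (by norm_num) (one_le_edgeDist 2 3 1 4 (by decide))
lemma bAH : ((![1,2,2,2,2] (typeI s(0,1)) : ℕ) : ℕ∞) ≤ edgeDist G0 s(0,1) s(3,6) := by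
  rw [show typeI s(0,1) = 1 by decide]
  exact le_trans (by norm_num) (two_le_edgeDist 0 1 3 6 (by decide))
lemma bHA : ((![1,2,2,2,2] (typeI s(3,6)) : ℕ) : ℕ∞) ≤ edgeDist G0 s(3,6) s(0,1) := by
  rw [show typeI s(3,6) = 1 by decide]
  exact le_trans (by norm_num) (two_le_edgeDist 3 6 0 1 (by decide))
lemma bEG : ((![1,2,2,2,2] (typeI s(0,4)) : ℕ) : ℕ∞) ≤ edgeDist G0 s(0,4) s(2,5) := by
  rw [show typeI s(0,4) = 2 by decide]
  exact le_trans (by norm_num; decide) (two_le_edgeDist 0 4 2 5 (by decide))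
lemma bGE : ((![1,2,2,2,2] (typeI s(2,5)) : ℕ) : ℕ∞) ≤ edgeDist G0 s(2,5) s(0,4) := by
  rw [show typeI s(2,5) = 2 by decide]
  exact le_trans (by norm_num; decide) (two_le_edgeDist 2 5 0 4 (by decide))

lemma bFC2 : ((![1,2,2,2,2] (typeII s(1,2)) : ℕ) : ℕ∞) ≤ edgeDist G0 s(1,2) s(3,4) := by
  rw [show typeII s(1,2) = 0 by decide]
  exact le_trans (by norm_num) (one_le_edgeDist 1 2 3 4 (by decide))
lemma bCF2 : ((![1,2,2,2,2] (typeII s(3,4)) : ℕ) : ℕ∞) ≤ edgeDist G0 s(3,4) s(1,2) := by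
  rw [show typeII s(3,4) = 0 by decide]
  exact le_trans (by norm_num) (one_le_edgeDist 3 4 1 2 (by decide))
lemma bAH2 : ((![1,2,2,2,2] (typeII s(0,1)) : ℕ) : ℕ∞) ≤ edgeDist G0 s(0,1) s(3,6) := by
  rw [show typeII s(0,1) = 1 by decide]
  exact le_trans (by norm_num) (two_le_edgeDist 0 1 3 6 (by decide))
lemma bHA2 : ((![1,2,2,2,2] (typeII s(3,6)) : ℕ) : ℕ∞) ≤ edgeDist G0 s(3,6) s(0,1) := by
  rw [show typeII s(3,6) = 1 by decide]
  exact le_trans (by norm_num) (two_le_edgeDist 3 6 0 1 (by decide))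
lemma bEG2 : ((![1,2,2,2,2] (typeII s(0,4)) : ℕ) : ℕ∞) ≤ edgeDist G0 s(0,4) s(2,5) := by
  rw [show typeII s(0,4) = 2 by decide]
  exact le_trans (by norm_num; decide) (two_le_edgeDist 0 4 2 5 (by decide))
lemma bGE2 : ((![1,2,2,2,2] (typeII s(2,5)) : ℕ) : ℕ∞) ≤ edgeDist G0 s(2,5) s(0,4) := by
  rw [show typeII s(2,5) = 2 by decide]
  exact le_trans (by norm_num; decide) (two_le_edgeDist 2 5 0 4 (by decide))

lemma typeI_packing : IsPackingEdgeColoring G0 ![1,2,2,2,2] typeI := by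
  intro e he f hf hne hcol
  rcases mem_G0 e he with rfl|rfl|rfl|rfl|rfl|rfl|rfl|rfl <;>
    rcases mem_G0 f hf with rfl|rfl|rfl|rfl|rfl|rfl|rfl|rfl <;>
    first
      | exact absurd rfl hne
      | exact absurd hcol (by decide)
      | exact bFC | exact bCF | exact bAH | exact bHA | exact bEG | exact bGE

lemma typeII_packing : IsPackingEdgeColoring G0 ![1,2,2,2,2] typeII := by
  intro e he f hf hne hcol
  rcases mem_G0 e he with rfl|rfl|rfl|rfl|rfl|rfl|rfl|rfl <;>
    rcases mem_G0 f hf with rfl|rfl|rfl|rfl|rfl|rfl|rfl|rfl <;>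
    first
      | exact absurd rfl hne
      | exact absurd hcol (by decide)
      | exact bFC2 | exact bCF2 | exact bAH2 | exact bHA2 | exact bEG2 | exact bGE2

/-- Up to the reflection symmetry of the house and permutation of the four 2-colors,
the house graph has exactly two $(1,2^4)$-packing edge-colorings: Type I and Type II. -/
theorem stmt5 :
    IsPackingEdgeColoring G0 ![1,2,2,2,2] typeI ∧
    IsPackingEdgeColoring G0 ![1,2,2,2,2] typeII ∧
    (∀ c : Sym2 (Fin 7) → Fin 5, IsPackingEdgeColoring G0 ![1,2,2,2,2] c →
      EquivCol c typeI ∨ EquivCol c typeII) ∧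
    ¬ EquivCol typeI typeII := by
  refine ⟨typeI_packing, typeII_packing, ?_, ?_⟩
  · intro c hc
    have key := classify (c s(1,2)) (c s(2,3))
      (conflict_share hc memB memC (by decide) (Sym2.mem_mk_right 1 2) (Sym2.mem_mk_left 2 3))
      (c s(3,4))
      ⟨conflict_share hc memC memD (by decide) (Sym2.mem_mk_right 2 3) (Sym2.mem_mk_left 3 4),
       conflict_adj hc memB memD (by decide) (Sym2.mem_mk_right 1 2) (Sym2.mem_mk_left 3 4) (by decide)⟩
      (c s(1,4))
      ⟨conflict_share hc memB memF (by decide) (Sym2.mem_mk_left 1 2) (Sym2.mem_mk_left 1 4),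
       conflict_share hc memD memF (by decide) (Sym2.mem_mk_right 3 4) (Sym2.mem_mk_right 1 4),
       conflict_adj hc memC memF (by decide) (Sym2.mem_mk_left 2 3) (Sym2.mem_mk_left 1 4) (by decide)⟩
      (c s(0,1))
      ⟨conflict_share hc memA memB (by decide) (Sym2.mem_mk_right 0 1) (Sym2.mem_mk_left 1 2),
       conflict_share hc memA memF (by decide) (Sym2.mem_mk_right 0 1) (Sym2.mem_mk_left 1 4),
       conflict_adj hc memA memC (by decide) (Sym2.mem_mk_right 0 1) (Sym2.mem_mk_left 2 3) (by decide),
       conflict_adj hc memA memD (by decide) (Sym2.mem_mk_left 0 1) (Sym2.mem_mk_right 3 4) (by decide)⟩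
      (c s(0,4))
      ⟨conflict_share hc memA memE (by decide) (Sym2.mem_mk_left 0 1) (Sym2.mem_mk_left 0 4),
       conflict_share hc memD memE (by decide) (Sym2.mem_mk_right 3 4) (Sym2.mem_mk_right 0 4),
       conflict_share hc memE memF (by decide) (Sym2.mem_mk_right 0 4) (Sym2.mem_mk_right 1 4),
       conflict_adj hc memB memE (by decide) (Sym2.mem_mk_left 1 2) (Sym2.mem_mk_left 0 4) (by decide),
       conflict_adj hc memC memE (by decide) (Sym2.mem_mk_right 2 3) (Sym2.mem_mk_right 0 4) (by decide)⟩
      (c s(2,5))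
      ⟨conflict_share hc memB memG (by decide) (Sym2.mem_mk_right 1 2) (Sym2.mem_mk_left 2 5),
       conflict_share hc memC memG (by decide) (Sym2.mem_mk_left 2 3) (Sym2.mem_mk_left 2 5),
       conflict_adj hc memA memG (by decide) (Sym2.mem_mk_right 0 1) (Sym2.mem_mk_left 2 5) (by decide),
       conflict_adj hc memD memG (by decide) (Sym2.mem_mk_left 3 4) (Sym2.mem_mk_left 2 5) (by decide),
       conflict_adj hc memF memG (by decide) (Sym2.mem_mk_left 1 4) (Sym2.mem_mk_left 2 5) (by decide)⟩
      (c s(3,6))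
      ⟨conflict_share hc memC memH (by decide) (Sym2.mem_mk_right 2 3) (Sym2.mem_mk_left 3 6),
       conflict_share hc memD memH (by decide) (Sym2.mem_mk_left 3 4) (Sym2.mem_mk_left 3 6),
       conflict_adj hc memB memH (by decide) (Sym2.mem_mk_right 1 2) (Sym2.mem_mk_left 3 6) (by decide),
       conflict_adj hc memE memH (by decide) (Sym2.mem_mk_right 0 4) (Sym2.mem_mk_left 3 6) (by decide),
       conflict_adj hc memF memH (by decide) (Sym2.mem_mk_right 1 4) (Sym2.mem_mk_left 3 6) (by decide),
       conflict_adj hc memG memH (by decide) (Sym2.mem_mk_left 2 5) (Sym2.mem_mk_left 3 6) (by decide)⟩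
    rcases key with ⟨hC0, hF0, hAH, hEG, hA0, hE0, hB0, hD0, hAE, hAB, hAD, hEB, hED, hBD⟩ |
      ⟨hB0, hD0, hAH, hEG, hA0, hE0, hC0, hF0, hAE, hAC, hAF, hEC, hEF, hCF⟩
    · -- type I
      left
      have hd : (c s(0,1)) ≠ 0 ∧ (c s(0,4)) ≠ 0 ∧ (c s(1,2)) ≠ 0 ∧ (c s(3,4)) ≠ 0 ∧
          _ ≠ _ ∧ _ ≠ _ ∧ _ ≠ _ ∧ _ ≠ _ ∧ _ ≠ _ ∧ _ ≠ _ :=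
        ⟨hA0, hE0, hB0, hD0, hAE, hAB, hAD, hEB, hED, hBD⟩
      obtain ⟨v0, v1, v2, v3, v4⟩ := mkPerm_vals _ _ _ _ hd
      refine ⟨Equiv.ofBijective _ (mkPerm_bijective _ _ _ _ hd), ?_, Or.inl ?_⟩
      · simpa [Equiv.ofBijective_apply] using v0
      · intro e he
        rcases mem_G0 e he with rfl|rfl|rfl|rfl|rfl|rfl|rfl|rfl <;>
          simp only [Equiv.ofBijective_apply]
        · rw [show typeI s(0,1) = 1 by decide]; exact v1
        · rw [show typeI s(1,2) = 3 by decide]; exact v3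
        · rw [show typeI s(2,3) = 0 by decide, hC0]; exact v0
        · rw [show typeI s(3,4) = 4 by decide]; exact v4
        · rw [show typeI s(0,4) = 2 by decide]; exact v2
        · rw [show typeI s(1,4) = 0 by decide, hF0]; exact v0
        · rw [show typeI s(2,5) = 2 by decide, ← hEG]; exact v2
        · rw [show typeI s(3,6) = 1 by decide, ← hAH]; exact v1
    · -- type II
      right
      have hd : (c s(0,1)) ≠ 0 ∧ (c s(0,4)) ≠ 0 ∧ (c s(1,4)) ≠ 0 ∧ (c s(2,3)) ≠ 0 ∧
          _ ≠ _ ∧ _ ≠ _ ∧ _ ≠ _ ∧ _ ≠ _ ∧ _ ≠ _ ∧ _ ≠ _ :=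
        ⟨hA0, hE0, hF0, hC0, hAE, hAF, hAC, hEF, hEC, fun h => hCF h.symm⟩
      obtain ⟨v0, v1, v2, v3, v4⟩ := mkPerm_vals _ _ _ _ hd
      refine ⟨Equiv.ofBijective _ (mkPerm_bijective _ _ _ _ hd), ?_, Or.inl ?_⟩
      · simpa [Equiv.ofBijective_apply] using v0
      · intro e he
        rcases mem_G0 e he with rfl|rfl|rfl|rfl|rfl|rfl|rfl|rfl <;>
          simp only [Equiv.ofBijective_apply]
        · rw [show typeII s(0,1) = 1 by decide]; exact v1
        · rw [show typeII s(1,2) = 0 by decide, hB0]; exact v0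
        · rw [show typeII s(2,3) = 4 by decide]; exact v4
        · rw [show typeII s(3,4) = 0 by decide, hD0]; exact v0
        · rw [show typeII s(0,4) = 2 by decide]; exact v2
        · rw [show typeII s(1,4) = 3 by decide]; exact v3
        · rw [show typeII s(2,5) = 2 by decide, ← hEG]; exact v2
        · rw [show typeII s(3,6) = 1 by decide, ← hAH]; exact v1
  · rintro ⟨σ, hσ0, h | h⟩
    · have := h s(1,4) memF
      rw [show typeI s(1,4) = 0 by decide, hσ0, show typeII s(1,4) = 3 by decide] at this
      exact absurd this (by decide)
    · have := h s(1,4) memF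
      rw [show (Sym2.map houseRefl s(1,4) : Sym2 (Fin 7)) = s(1,4) by decide] at this
      rw [show typeI s(1,4) = 0 by decide, hσ0, show typeII s(1,4) = 3 by decide] at this
      exact absurd this (by decide)
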